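/- arXiv:2102.00309 — 2 statements merged into one kernel-verified Lean document; each statement's English description precedes it below -/
import Mathlib

section
/- Let (a_n) be a sequence of real numbers with ∑ |a_n| < ∞ such that for every natural number k, |a_{2k-1} - a_{2k}| ≤ ∑_{n=k+1}^∞ |a_{2n-1} - a_{2n}|. Then there exists a sequence of signs (ε_i) ∈ {1,-1}^ℕ such that ε_{2k-1} + ε_{2k} = 0 for each k and ∑_{i=1}^∞ ε_i a_i = 0. -/
/-!
Write `b k = a (2k-1) - a (2k)`. Signs with `ε (2k-1) = -ε (2k) = s k` turn the series into
`∑ s k * b k`, so it suffices to choose `s k = ±1` with `∑ s k * b k = 0`. Choose them greedily,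
each sign pushing the partial sum `S k` towards `0`; then `|S (k+1)| = ||S k| - |b k||`. With
`T k = ∑_{n ≥ k} |b n|` this keeps `|S k| ≤ T k`: if `|S k| ≥ |b k|` the new partial sum is at most
`T k - |b k| = T (k+1)`, and otherwise it is at most `|b k| ≤ T (k+1)` by the domination
hypothesis. Since `T k → 0`, the partial sums tend to `0`.
-/

open Finset

noncomputable def greedySign (s x : ℝ) : ℝ := if 0 ≤ s * x then -1 else 1

theorem abs_greedySign (s x : ℝ) : |greedySign s x| = 1 := by
  unfold greedySign; split_ifs <;> simp

theorem abs_add_greedySign_mul (s x : ℝ) : |s + greedySign s x * x| = |(|s| - |x|)| := by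
  have hsq : (|s| - |x|) ^ 2 = s ^ 2 - 2 * |s * x| + x ^ 2 := by
    rw [sub_sq, abs_mul, sq_abs, sq_abs]; ring
  rw [← sq_eq_sq_iff_abs_eq_abs, hsq, greedySign]
  split_ifs with h
  · rw [abs_of_nonneg h]; ring
  · rw [abs_of_neg (not_le.1 h)]; ring

section Greedy

variable (b : ℕ → ℝ)

noncomputable def greedySum : ℕ → ℝ
  | 0 => 0
  | k + 1 => greedySum k + greedySign (greedySum k) (b k) * b k

noncomputable def greedySigns (k : ℕ) : ℝ := greedySign (greedySum b k) (b k)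

theorem greedySum_eq_sum (k : ℕ) : greedySum b k = ∑ i ∈ range k, greedySigns b i * b i := by
  induction k with
  | zero => rfl
  | succ k ih => rw [sum_range_succ, ← ih]; rfl

variable {b}

theorem abs_greedySum_le_tsum_tail (hb : Summable fun n => |b n|)
    (hdom : ∀ k, |b k| ≤ ∑' n, |b (n + (k + 1))|) (k : ℕ) :
    |greedySum b k| ≤ ∑' n, |b (n + k)| := by
  induction k with
  | zero => simpa [greedySum] using tsum_nonneg fun n => abs_nonneg (b n)
  | succ k ih =>
    have htail : ∑' n, |b (n + k)| = |b k| + ∑' n, |b (n + (k + 1))| := by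
      rw [((summable_nat_add_iff k).2 hb).tsum_eq_zero_add]
      simp only [zero_add, add_right_comm _ 1 k, add_assoc]
    rw [greedySum, abs_add_greedySign_mul, abs_le]
    constructor <;> linarith [hdom k, abs_nonneg (greedySum b k), abs_nonneg (b k)]

end Greedy

theorem exists_signs_hasSum_zero {b : ℕ → ℝ} (hb : Summable fun n => |b n|)
    (hdom : ∀ k, |b k| ≤ ∑' n, |b (n + (k + 1))|) :
    ∃ s : ℕ → ℝ, (∀ k, |s k| = 1) ∧ HasSum (fun k => s k * b k) 0 := by
  refine ⟨greedySigns b, fun k => abs_greedySign _ _, ?_⟩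
  have hsummable : Summable fun k => greedySigns b k * b k :=
    hb.of_norm_bounded fun k => by simp [greedySigns, abs_greedySign]
  rw [hsummable.hasSum_iff_tendsto_nat]
  refine squeeze_zero_norm (fun k => ?_) (tendsto_sum_nat_add fun n => |b n|)
  rw [← greedySum_eq_sum]
  exact abs_greedySum_le_tsum_tail hb hdom k

theorem summable_abs_sub_pairs {f : ℕ → ℝ} (hf : Summable fun n => |f n|) :
    Summable fun k => |f (2 * k) - f (2 * k + 1)| := by
  have heven := hf.comp_injective (i := fun k => 2 * k) fun _ _ h => by simpa using h
  have hodd := hf.comp_injective (i := fun k => 2 * k + 1) fun _ _ h => by simpa using h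
  exact (heven.add hodd).of_nonneg_of_le (fun _ => abs_nonneg _) fun _ => abs_sub _ _

theorem hasSum_neg_one_pow_mul_of_hasSum_pairs {f s : ℕ → ℝ} {c : ℝ}
    (hf : Summable fun n => |f n|) (hs : ∀ k, |s k| ≤ 1)
    (h : HasSum (fun k => s k * (f (2 * k) - f (2 * k + 1))) c) :
    HasSum (fun i => (-1) ^ i * s (i / 2) * f i) c := by
  have hsubseq : ∀ {e : ℕ → ℕ}, e.Injective → Summable fun k => s k * f (e k) := fun he =>
    (hf.comp_injective he).of_norm_bounded fun k => by
      rw [Real.norm_eq_abs, abs_mul]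
      exact mul_le_of_le_one_left (abs_nonneg _) (hs k)
  obtain ⟨A, hA⟩ := hsubseq (e := fun k => 2 * k) fun _ _ h => by simpa using h
  obtain ⟨B, hB⟩ := hsubseq (e := fun k => 2 * k + 1) fun _ _ h => by simpa using h
  have hAB : A - B = c := (hA.sub hB).unique (by simpa only [mul_sub] using h)
  have heven : HasSum (fun k => (-1) ^ (2 * k) * s (2 * k / 2) * f (2 * k)) A := by
    simpa [pow_mul] using hA
  have hodd : HasSum (fun k => (-1) ^ (2 * k + 1) * s ((2 * k + 1) / 2) * f (2 * k + 1)) (-B) := by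
    have hdiv : ∀ k, (2 * k + 1) / 2 = k := by omega
    simpa [pow_succ, pow_mul, hdiv] using hB.neg
  rw [← hAB, sub_eq_add_neg]
  exact heven.even_add_odd hodd

theorem signs_exist_of_tail_domination (a : ℕ → ℝ)
    (hsum : Summable (fun n => |a n|))
    (hdom : ∀ k : ℕ, 1 ≤ k →
      |a (2 * k - 1) - a (2 * k)| ≤
        ∑' n : ℕ, |a (2 * (n + k + 1) - 1) - a (2 * (n + k + 1))|) :
    ∃ ε : ℕ → ℝ, (∀ i, 1 ≤ i → ε i = 1 ∨ ε i = -1) ∧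
      (∀ k : ℕ, 1 ≤ k → ε (2 * k - 1) + ε (2 * k) = 0) ∧
      ∑' i : ℕ, ε (i + 1) * a (i + 1) = 0 := by
  set f : ℕ → ℝ := fun i => a (i + 1)
  have hf : Summable fun n => |f n| := (summable_nat_add_iff 1).2 hsum
  set b : ℕ → ℝ := fun k => f (2 * k) - f (2 * k + 1)
  have hpair : ∀ m, a (2 * (m + 1) - 1) - a (2 * (m + 1)) = b m := fun m => by
    simp only [b, f]; congr 2
  have hdom_b : ∀ k, |b k| ≤ ∑' n, |b (n + (k + 1))| := fun k => by
    simpa only [hpair] using hdom (k + 1) k.succ_pos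
  obtain ⟨s, hs, hs0⟩ := exists_signs_hasSum_zero (summable_abs_sub_pairs hf) hdom_b
  refine ⟨fun i => (-1) ^ (i - 1) * s ((i - 1) / 2), fun i _ => ?_, fun k hk => ?_, ?_⟩
  · rw [← abs_eq zero_le_one]
    simp [abs_mul, hs]
  · obtain ⟨m, rfl⟩ := Nat.exists_eq_add_of_le' hk
    have hdiv : (2 * m + 1) / 2 = m := by omega
    simp [show 2 * (m + 1) - 1 = 2 * m + 1 by omega, pow_succ, pow_mul, hdiv]
  · simpa using (hasSum_neg_one_pow_mul_of_hasSum_pairs hf (fun k => (hs k).le) hs0).tsum_eq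
end

section
/- There is no sequence (ε_i) ∈ {1,-1}^ℕ with period N < 6 such that ∑_{i=1}^N ε_i = 0 and ∑_{i=1}^N ε_i q^i = 0 for some q ∈ (0,1). In other words, the shortest period of a balanced ±-polynomial with a root in (0,1) is 6. -/
/-!
A sum of `N` signs is `N` minus twice the number of minus signs, so a balanced sign
polynomial has even length; this rules out `N = 1, 3, 5`. For `N = 2` the polynomial is
`±q(1 - q)`. For `N = 4`, eliminating `ε₃` with the balance condition gives
`ε₁ P(q) = q (1 - q) (1 + (1 + ε₁ε₂) q - ε₁ε₄ q²) ≥ q (1 - q) (1 - q²) > 0`.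
For `N = 6`, `x - x² - x³ - x⁴ + x⁵ + x⁶ = x (x³ - 1) (x² + x - 1)` vanishes at `q = φ⁻¹`.
-/

open Finset Real
open scoped goldenRatio

theorem sum_eq_card_sub_two_mul_card_filter {ι : Type*} (s : Finset ι) (ε : ι → ℝ)
    (hε : ∀ i ∈ s, ε i = 1 ∨ ε i = -1) :
    ∑ i ∈ s, ε i = #s - 2 * #{i ∈ s | ε i = -1} := by
  have h : ∀ i ∈ s, ε i = 1 - 2 * if ε i = -1 then 1 else 0 := by
    intro i hi
    rcases hε i hi with h | h <;> norm_num [h]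
  rw [sum_congr rfl h, sum_sub_distrib, ← mul_sum, sum_boole]
  simp

theorem even_card_of_sum_eq_zero {ι : Type*} (s : Finset ι) (ε : ι → ℝ)
    (hε : ∀ i ∈ s, ε i = 1 ∨ ε i = -1) (h : ∑ i ∈ s, ε i = 0) : Even #s := by
  rw [sum_eq_card_sub_two_mul_card_filter s ε hε, sub_eq_zero] at h
  exact ⟨#{i ∈ s | ε i = -1}, by rw [← two_mul]; exact_mod_cast h⟩

theorem balanced_two_ne_zero {a b q : ℝ} (ha : a = 1 ∨ a = -1) (hab : a + b = 0)
    (hq : q ∈ Set.Ioo 0 1) : a * q + b * q ^ 2 ≠ 0 := by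
  obtain ⟨hq0, hq1⟩ := hq
  have key : a * (a * q + b * q ^ 2) = q * (1 - q) := by
    rw [show b = -a by linarith]
    linear_combination (q - q ^ 2) * mul_self_eq_one_iff.mpr ha
  intro h
  rw [h, mul_zero] at key
  nlinarith [mul_pos hq0 (sub_pos.mpr hq1)]

theorem balanced_four_ne_zero {a b c d q : ℝ} (ha : a = 1 ∨ a = -1) (hb : b = 1 ∨ b = -1)
    (hd : d = 1 ∨ d = -1) (habcd : a + b + c + d = 0) (hq : q ∈ Set.Ioo 0 1) :
    a * q + b * q ^ 2 + c * q ^ 3 + d * q ^ 4 ≠ 0 := by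
  obtain ⟨hq0, hq1⟩ := hq
  have key : a * (a * q + b * q ^ 2 + c * q ^ 3 + d * q ^ 4) =
      q * (1 - q) * (1 + (1 + a * b) * q - a * d * q ^ 2) := by
    rw [show c = -(a + b + d) by linarith]
    linear_combination (q - q ^ 3) * mul_self_eq_one_iff.mpr ha
  have hab : 0 ≤ 1 + a * b := by
    rcases ha with rfl | rfl <;> rcases hb with rfl | rfl <;> norm_num
  have had : a * d ≤ 1 := by
    rcases ha with rfl | rfl <;> rcases hd with rfl | rfl <;> norm_num
  have hfactor : 0 < 1 + (1 + a * b) * q - a * d * q ^ 2 := by nlinarith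
  have hpos : 0 < q * (1 - q) := mul_pos hq0 (sub_pos.mpr hq1)
  intro h
  rw [h, mul_zero] at key
  nlinarith [mul_pos hpos hfactor]

theorem goldenRatio_inv_mem_Ioo : φ⁻¹ ∈ Set.Ioo (0 : ℝ) 1 :=
  ⟨inv_pos.mpr goldenRatio_pos, inv_lt_one_of_one_lt₀ one_lt_goldenRatio⟩

theorem goldenRatio_inv_sq_add_self : φ⁻¹ ^ 2 + φ⁻¹ = 1 := by
  rw [inv_goldenRatio, neg_sq, goldenConj_sq]
  ring

theorem shortest_balanced_period_is_six :
    (∀ N : ℕ, 1 ≤ N → N < 6 → ∀ ε : ℕ → ℝ, (∀ i, ε i = 1 ∨ ε i = -1) →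
      ∀ q : ℝ, q ∈ Set.Ioo (0 : ℝ) 1 →
        ∑ i ∈ Finset.Icc 1 N, ε i = 0 → ∑ i ∈ Finset.Icc 1 N, ε i * q ^ i ≠ 0) ∧
    (∃ ε : ℕ → ℝ, (∀ i, ε i = 1 ∨ ε i = -1) ∧ ∃ q ∈ Set.Ioo (0 : ℝ) 1,
      ∑ i ∈ Finset.Icc 1 6, ε i = 0 ∧ ∑ i ∈ Finset.Icc 1 6, ε i * q ^ i = 0) := by
  constructor
  · intro N hN1 hN6 ε hε q hq hbal
    have hN : Even N := by
      simpa using even_card_of_sum_eq_zero (Icc 1 N) ε (fun i _ => hε i) hbal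
    obtain rfl | rfl : N = 2 ∨ N = 4 := by
      obtain ⟨m, rfl⟩ := hN
      omega
    all_goals
      simp only [sum_Icc_succ_top, Nat.one_le_ofNat, Nat.reduceAdd, Icc_self, sum_singleton,
        pow_one] at hbal ⊢
    · exact balanced_two_ne_zero (hε 1) hbal hq
    · exact balanced_four_ne_zero (hε 1) (hε 2) (hε 4) hbal hq
  · obtain ⟨q, hq, hroot⟩ : ∃ q ∈ Set.Ioo (0 : ℝ) 1, q ^ 2 + q = 1 :=
      ⟨φ⁻¹, goldenRatio_inv_mem_Ioo, goldenRatio_inv_sq_add_self⟩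
    refine ⟨fun i => if i ∈ ({2, 3, 4} : Finset ℕ) then -1 else 1, fun i => ?_, q, hq, ?_, ?_⟩
    · dsimp only
      split_ifs <;> simp
    all_goals
      simp only [sum_Icc_succ_top, Nat.one_le_ofNat, Nat.reduceAdd, Icc_self, sum_singleton,
        pow_one, mem_insert, mem_singleton]
      norm_num
    linear_combination q * (q ^ 3 - 1) * hroot
end
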